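/- Let φ, θ ∈ ℝ with |φ| < 1, let c > 0, and let s ∈ ℂ with Im s > 0; assume c·s·θ − φ ≠ 0 and θ ≠ 0. Set α = (c s(1+θ²) + 1 + φ²)/(c s θ − φ) and ε(α) = sgn(Im α), and let √· denote the complex square root with nonnegative imaginary part. Then the contour integral I = (1/(2πi)) ∮_{|ξ|=1} [c s + |(1 − φξ)/(1 + θξ)|²]^{-1} dξ/ξ, where for ξ on the unit circle |(1−φξ)/(1+θξ)|² means (1−φξ)(1−φξ̄)/((1+θξ)(1+θξ̄)) with ξ̄ = 1/ξ, equals I = [θ/(csθ − φ)] · { 1 − [(φ+θ)(1+φθ)/(θ(csθ − φ))] · ε(α)/√(α² − 4) }. -/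

import Mathlib

/-!
On the unit circle `ξ⁻¹ = conj ξ`, and the integrand is the rational function
`(1 + θξ)(ξ + θ) / (ξ Q(ξ))` with `Q(ξ) = cs(1 + θξ)(ξ + θ) + (1 - φξ)(ξ - φ) = k(ξ² + αξ + 1)`,
`k = csθ - φ`. On the circle `conj ξ · Q(ξ) = cs|1 + θξ|² + |1 - φξ|²`, which cannot vanish since
`Im s > 0` and `|φ| < 1`; as the two roots of `ξ² + αξ + 1` have product `1`, exactly one of them,
`r₁`, lies inside the circle. Partial fractions and the residues at `0` and `r₁` give
`I = (θ + (1 + θ² - θα)/(r₁ - r₂))/k`, and `k(1 + θ² - θα) = -(φ + θ)(1 + φθ)`. If this vanishes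
both sides equal `θ/k`; otherwise `α` is not real, and comparing the norms of the two roots shows
`r₁ - r₂ = ε(α)√(α² - 4)`.
-/

open MeasureTheory Complex Real Filter Topology

/-- The complex square root with nonnegative imaginary part. -/
noncomputable def sqrtIm (z : ℂ) : ℂ :=
  if 0 ≤ (z ^ (1 / 2 : ℂ)).im then z ^ (1 / 2 : ℂ) else -(z ^ (1 / 2 : ℂ))

open Metric ComplexConjugate

theorem sqrtIm_sq (z : ℂ) : sqrtIm z ^ 2 = z := by
  unfold sqrtIm
  split_ifs <;> simp

theorem sqrtIm_im_nonneg (z : ℂ) : 0 ≤ (sqrtIm z).im := by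
  unfold sqrtIm
  split_ifs with h
  · exact h
  · simpa using (not_le.1 h).le

theorem sqrtIm_im_pos {z : ℂ} (hz : z.im = 0 → z.re < 0) : 0 < (sqrtIm z).im := by
  refine (sqrtIm_im_nonneg z).lt_of_ne fun h => ?_
  have him := congrArg im (sqrtIm_sq z)
  have hre := congrArg re (sqrtIm_sq z)
  simp only [sq, mul_im, mul_re, ← h, mul_zero, zero_mul, zero_add, sub_zero] at him hre
  exact (hz him.symm).not_ge (hre ▸ mul_self_nonneg _)

theorem norm_sub_sign_mul_lt_norm_add {α w : ℂ} (hα : α.im ≠ 0) (hw : 0 < w.im)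
    (hsq : (w ^ 2).im = (α ^ 2).im) :
    ‖α - Real.sign α.im * w‖ < ‖α + Real.sign α.im * w‖ := by
  have hre : w.re * w.im = α.re * α.im := by simp only [sq, mul_im] at hsq; linarith
  have hε := Real.sign_mul_pos_of_ne_zero _ hα
  have hkey : 0 < Real.sign α.im * (α.re * w.re + α.im * w.im) := by
    refine pos_of_mul_pos_right (a := w.im) ?_ hw.le
    have : w.im * (Real.sign α.im * (α.re * w.re + α.im * w.im)) =
        Real.sign α.im * α.im * (α.re ^ 2 + w.im ^ 2) := by
      linear_combination Real.sign α.im * α.re * hre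
    rw [this]
    exact mul_pos hε (by positivity)
  rw [← sq_lt_sq₀ (norm_nonneg _) (norm_nonneg _), Complex.sq_norm, Complex.sq_norm,
    normSq_apply, normSq_apply]
  simp only [sub_re, add_re, sub_im, add_im, mul_re, mul_im, ofReal_re, ofReal_im, zero_mul,
    sub_zero, add_zero]
  nlinarith

theorem exists_roots_norm_lt_one_lt {α : ℂ} (h : ∀ z : ℂ, ‖z‖ = 1 → z ^ 2 + α * z + 1 ≠ 0) :
    ∃ r₁ r₂ : ℂ, r₁ + r₂ = -α ∧ r₁ * r₂ = 1 ∧ ‖r₁‖ < 1 ∧ 1 < ‖r₂‖ := by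
  set p := (-α + sqrtIm (α ^ 2 - 4)) / 2
  set q := (-α - sqrtIm (α ^ 2 - 4)) / 2
  have hsum : p + q = -α := by ring
  have hprod : p * q = 1 := by linear_combination -sqrtIm_sq (α ^ 2 - 4) / 4
  have hnorm : ‖p‖ * ‖q‖ = 1 := by rw [← norm_mul, hprod, norm_one]
  have hp : ‖p‖ ≠ 1 := fun hp => h p hp (by linear_combination p * hsum - hprod)
  rcases hp.lt_or_gt with hp | hp
  · exact ⟨p, q, hsum, hprod, hp, by nlinarith [norm_nonneg p]⟩
  · exact ⟨q, p, by rw [add_comm, hsum], by rw [mul_comm, hprod], by nlinarith [norm_nonneg q], hp⟩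

theorem sub_eq_sign_mul_sqrtIm {α r₁ r₂ : ℂ} (hα : α.im ≠ 0) (hsum : r₁ + r₂ = -α)
    (hprod : r₁ * r₂ = 1) (hlt : ‖r₁‖ < ‖r₂‖) :
    r₁ - r₂ = Real.sign α.im * sqrtIm (α ^ 2 - 4) := by
  set w := sqrtIm (α ^ 2 - 4)
  set ε : ℂ := (Real.sign α.im : ℂ)
  have hε : ε ^ 2 = 1 := by
    rcases Real.sign_apply_eq_of_ne_zero _ hα with h | h <;> simp [ε, h]
  have hw : 0 < w.im := sqrtIm_im_pos fun him => by
    have hre : α.re = 0 := by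
      simp only [sq, sub_im, mul_im] at him
      norm_num at him
      exact (mul_eq_zero.1 (by linarith : α.re * α.im = 0)).resolve_right hα
    simp only [sq, sub_re, mul_re, hre, mul_zero, zero_sub, re_ofNat, sub_neg]
    nlinarith [sq_nonneg α.im]
  have hsq : (r₁ - r₂) ^ 2 = (ε * w) ^ 2 := by
    linear_combination (r₁ + r₂ - α) * hsum - 4 * hprod - w ^ 2 * hε - sqrtIm_sq (α ^ 2 - 4)
  refine (sq_eq_sq_iff_eq_or_eq_neg.1 hsq).resolve_right fun hneg => ?_
  have h₁ : r₁ = -(α + ε * w) / 2 := by linear_combination (hsum + hneg) / 2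
  have h₂ : r₂ = -(α - ε * w) / 2 := by linear_combination (hsum - hneg) / 2
  rw [h₁, h₂, norm_div, norm_div, norm_neg, norm_neg] at hlt
  refine lt_asymm (norm_sub_sign_mul_lt_norm_add hα hw ?_)
    ((div_lt_div_iff_of_pos_right (by simp)).1 hlt)
  rw [sqrtIm_sq]
  simp

theorem circleIntegral_sub_inv_of_notMem_closedBall {c w : ℂ} {R : ℝ} (hR : 0 ≤ R)
    (hw : w ∉ closedBall c R) : (∮ z in C(c, R), (z - w)⁻¹) = 0 := by
  refine DiffContOnCl.circleIntegral_eq_zero hR ?_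
  refine DifferentiableOn.diffContOnCl_ball (U := {w}ᶜ) ?_ fun z hz h => hw (h ▸ hz)
  exact ((differentiableOn_id.sub_const w).inv fun z hz => sub_ne_zero.2 hz)

theorem lagrange_partial_fractions {N : ℂ → ℂ} {u v t a b c z : ℂ}
    (hN : ∀ z, N z = u * z ^ 2 + v * z + t) (hab : a ≠ b) (hac : a ≠ c) (hbc : b ≠ c)
    (hza : z ≠ a) (hzb : z ≠ b) (hzc : z ≠ c) :
    N z / ((z - a) * (z - b) * (z - c)) =
      N a / ((a - b) * (a - c)) * (z - a)⁻¹ + N b / ((b - a) * (b - c)) * (z - b)⁻¹ +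
        N c / ((c - a) * (c - b)) * (z - c)⁻¹ := by
  simp only [hN]
  field_simp
  ring

theorem circleIntegral_quadratic_div_cubic {N : ℂ → ℂ} {u v t a b c x : ℂ} {R : ℝ}
    (hN : ∀ z, N z = u * z ^ 2 + v * z + t) (ha : a ∈ ball x R) (hb : b ∈ ball x R)
    (hc : c ∉ closedBall x R) (hab : a ≠ b) :
    (∮ z in C(x, R), N z / ((z - a) * (z - b) * (z - c))) =
      2 * π * I * (N a / ((a - b) * (a - c)) + N b / ((b - a) * (b - c))) := by
  have hR : 0 < R := dist_nonneg.trans_lt ha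
  have hac : a ≠ c := fun h => hc (h ▸ ball_subset_closedBall ha)
  have hbc : b ≠ c := fun h => hc (h ▸ ball_subset_closedBall hb)
  have hint : ∀ {p : ℂ}, p ∉ sphere x |R| → ∀ A : ℂ,
      CircleIntegrable (fun z => A * (z - p)⁻¹) x R := fun hp A =>
    (circleIntegrable_sub_inv_iff.2 (Or.inr hp)).const_fun_smul (a := A)
  have hsph : ∀ {p : ℂ}, p ∈ ball x R → p ∉ sphere x |R| := fun hp h => by
    rw [mem_sphere, abs_of_pos hR] at h; exact (mem_ball.1 hp).ne h
  have hcs : c ∉ sphere x |R| := fun h => hc <| by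
    rw [abs_of_pos hR] at h; exact sphere_subset_closedBall h
  have hfin : ({a, b, c} : Set ℂ).Finite := by simp
  have hpf : (fun z => N z / ((z - a) * (z - b) * (z - c))) =ᶠ[codiscreteWithin (sphere x |R|)]
      fun z => N a / ((a - b) * (a - c)) * (z - a)⁻¹ + N b / ((b - a) * (b - c)) * (z - b)⁻¹ +
        N c / ((c - a) * (c - b)) * (z - c)⁻¹ := by
    refine Filter.mem_of_superset (compl_finite_mem_codiscreteWithin hfin) fun z hz => ?_
    simp only [Set.mem_compl_iff, Set.mem_insert_iff, Set.mem_singleton_iff, not_or] at hz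
    exact lagrange_partial_fractions hN hab hac hbc hz.1 hz.2.1 hz.2.2
  rw [circleIntegral.circleIntegral_congr_codiscreteWithin hpf hR.ne',
    circleIntegral.integral_add ((hint (hsph ha) _).fun_add (hint (hsph hb) _)) (hint hcs _),
    circleIntegral.integral_add (hint (hsph ha) _) (hint (hsph hb) _)]
  simp only [circleIntegral.integral_const_mul, circleIntegral.integral_sub_inv_of_mem_ball ha,
    circleIntegral.integral_sub_inv_of_mem_ball hb,
    circleIntegral_sub_inv_of_notMem_closedBall hR.le hc]
  ring

theorem arma_integrand_eq {a φ θ ξ : ℂ} (hξ : ξ ≠ 0) (h₁ : 1 + θ * ξ ≠ 0) (h₂ : ξ + θ ≠ 0) :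
    (a + (1 - φ * ξ) * (1 - φ * ξ⁻¹) / ((1 + θ * ξ) * (1 + θ * ξ⁻¹)))⁻¹ * ξ⁻¹ =
      (1 + θ * ξ) * (ξ + θ) / (ξ * (a * ((1 + θ * ξ) * (ξ + θ)) + (1 - φ * ξ) * (ξ - φ))) := by
  have hsum : a + (1 - φ * ξ) * (1 - φ * ξ⁻¹) / ((1 + θ * ξ) * (1 + θ * ξ⁻¹)) =
      (a * ((1 + θ * ξ) * (ξ + θ)) + (1 - φ * ξ) * (ξ - φ)) / ((1 + θ * ξ) * (ξ + θ)) := by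
    have h₂' : 1 + θ * ξ⁻¹ = (ξ + θ) / ξ := by field_simp
    have h₃ : 1 - φ * ξ⁻¹ = (ξ - φ) / ξ := by field_simp
    rw [h₂', h₃, mul_div_assoc', mul_div_assoc', div_div_div_cancel_right₀ hξ,
      add_div' _ _ _ (mul_ne_zero h₁ h₂)]
  rw [hsum, inv_div, ← div_eq_mul_inv, div_div]
  ring

theorem arma_denominator_ne_zero {φ θ c : ℝ} {s ξ : ℂ} (hφ : |φ| < 1) (hc : 0 < c) (hs : 0 < s.im)
    (hξ : ‖ξ‖ = 1) :
    c * s * ((1 + θ * ξ) * (ξ + θ)) + (1 - φ * ξ) * (ξ - φ) ≠ 0 := by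
  intro h
  have hξξ : conj ξ * ξ = 1 := by rw [mul_comm, mul_conj, normSq_eq_norm_sq, hξ]; simp
  have hconj : conj ξ * (c * s * ((1 + θ * ξ) * (ξ + θ)) + (1 - φ * ξ) * (ξ - φ)) =
      c * s * normSq (1 + θ * ξ) + normSq (1 - φ * ξ) := by
    simp only [← mul_conj, map_add, map_sub, map_mul, map_one, conj_ofReal]
    linear_combination (c * s * (1 + θ * ξ) + (1 - φ * ξ)) * hξξ
  rw [h, mul_zero] at hconj
  have him := congrArg im hconj
  have hre := congrArg re hconj
  simp only [add_im, add_re, mul_im, mul_re, ofReal_re, ofReal_im, zero_im, zero_re] at him hre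
  have hθξ : normSq (1 + θ * ξ) = 0 := by
    simpa [hc.ne', hs.ne'] using him
  have hφξ : 1 - φ * ξ = 0 := normSq_eq_zero.1 (by rw [hθξ] at hre; linarith)
  have := congrArg norm (sub_eq_zero.1 hφξ)
  simp only [norm_one, Complex.norm_mul, norm_real, norm_eq_abs, hξ, mul_one] at this
  linarith

theorem arma_circleIntegral_eq {a φ θ k α r₁ r₂ : ℂ}
    (hQ : ∀ ξ, a * ((1 + θ * ξ) * (ξ + θ)) + (1 - φ * ξ) * (ξ - φ) = k * (ξ ^ 2 + α * ξ + 1))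
    (hsum : r₁ + r₂ = -α) (hprod : r₁ * r₂ = 1) (hr₁ : ‖r₁‖ < 1) (hr₂ : 1 < ‖r₂‖) :
    (2 * π * I)⁻¹ * (∮ ξ in C(0, 1),
        (a + (1 - φ * ξ) * (1 - φ * ξ⁻¹) / ((1 + θ * ξ) * (1 + θ * ξ⁻¹)))⁻¹ * ξ⁻¹) =
      (θ + (1 + θ ^ 2 - θ * α) / (r₁ - r₂)) / k := by
  have hfac : ∀ ξ, ξ ^ 2 + α * ξ + 1 = (ξ - r₁) * (ξ - r₂) := fun ξ => by
    linear_combination ξ * hsum - hprod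
  have hfin : ({0, -θ, -θ⁻¹} : Set ℂ).Finite := by simp
  -- the congruence is only off a finite set: for `|θ| = 1` the integrand has a junk value at `-θ`
  have hpf : (fun ξ => (a + (1 - φ * ξ) * (1 - φ * ξ⁻¹) / ((1 + θ * ξ) * (1 + θ * ξ⁻¹)))⁻¹ * ξ⁻¹)
      =ᶠ[codiscreteWithin (sphere 0 |1|)]
      fun ξ => k⁻¹ * ((1 + θ * ξ) * (ξ + θ) / ((ξ - 0) * (ξ - r₁) * (ξ - r₂))) := by
    refine Filter.mem_of_superset (compl_finite_mem_codiscreteWithin hfin) fun ξ hξ => ?_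
    simp only [Set.mem_compl_iff, Set.mem_insert_iff, Set.mem_singleton_iff, not_or] at hξ
    obtain ⟨hξ₀, hξθ, hξθ'⟩ := hξ
    have h₁ : 1 + θ * ξ ≠ 0 := fun h => hξθ' <| by
      have hθ : θ ≠ 0 := by rintro rfl; simp at h
      field_simp
      linear_combination h
    have h₂ : ξ + θ ≠ 0 := fun h => hξθ (by linear_combination h)
    dsimp only [Set.mem_ofPred_eq]
    rw [arma_integrand_eq hξ₀ h₁ h₂, hQ, hfac, sub_zero]
    simp only [div_eq_mul_inv, mul_inv]
    ring
  rw [circleIntegral.circleIntegral_congr_codiscreteWithin hpf one_ne_zero,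
    circleIntegral.integral_const_mul,
    circleIntegral_quadratic_div_cubic (u := θ) (v := 1 + θ ^ 2) (t := θ) (fun ξ => by ring)
      (mem_ball_self one_pos) (mem_ball_zero_iff.2 hr₁) (by simpa using hr₂)
      (fun h => by simp [← h] at hprod)]
  have hr₁₂ : r₁ - r₂ ≠ 0 := sub_ne_zero.2 fun h => by rw [h] at hr₁; linarith
  have hr₁0 : r₁ ≠ 0 := by rintro rfl; simp at hprod
  have hres₀ : (1 + θ * 0) * (0 + θ) / ((0 - r₁) * (0 - r₂)) = θ := by
    rw [zero_sub, zero_sub, neg_mul_neg, hprod]; ring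
  have hres₁ : (1 + θ * r₁) * (r₁ + θ) / ((r₁ - 0) * (r₁ - r₂)) =
      (1 + θ ^ 2 - θ * α) / (r₁ - r₂) := by
    have hroot : r₁ ^ 2 + α * r₁ + 1 = 0 := by rw [hfac, sub_self, zero_mul]
    field_simp
    linear_combination θ * hroot
  rw [hres₀, hres₁, mul_left_comm, inv_mul_cancel_left₀ two_pi_I_ne_zero, inv_mul_eq_div]

theorem arma_alpha_im_ne_zero {φ θ c : ℝ} {s α : ℂ} (hc : 0 < c) (hs : 0 < s.im)
    (hα : (c * s * θ - φ) * α = c * s * (1 + θ ^ 2) + 1 + φ ^ 2) (hX : 1 + θ ^ 2 - θ * α ≠ 0) :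
    α.im ≠ 0 := by
  intro him
  have h := congrArg im hα
  simp only [mul_im, sub_re, mul_re, ofReal_re, ofReal_im, zero_mul, sub_zero, add_zero, mul_zero,
    him, sub_im, zero_add, add_im, one_im, add_re, one_re] at h
  rw [← ofReal_pow, ← ofReal_pow, ofReal_im, ofReal_im, ofReal_re] at h
  have hre : θ * α.re = 1 + θ ^ 2 := by
    have hcs : c * s.im * (θ * α.re - (1 + θ ^ 2)) = 0 := by linarith
    linarith [(mul_eq_zero.1 hcs).resolve_left (by positivity)]
  apply hX
  apply Complex.ext
  · simp only [sq, sub_re, add_re, one_re, mul_re, ofReal_re, ofReal_im, mul_zero, sub_zero,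
      zero_mul, zero_re]
    linarith
  · simp [sq, him]

/-- Evaluation of the contour integral `I` for an ARMA(1,1) process (Equation (7)). -/
theorem arma_contour_integral
    (φ θ c : ℝ) (hφ : |φ| < 1) (hθ : θ ≠ 0) (hc : 0 < c)
    (s : ℂ) (hs : 0 < s.im)
    (hden : (c : ℂ) * s * (θ : ℂ) - (φ : ℂ) ≠ 0)
    (α : ℂ)
    (hα : α = ((c : ℂ) * s * (1 + (θ : ℂ) ^ 2) + 1 + (φ : ℂ) ^ 2) /
        ((c : ℂ) * s * (θ : ℂ) - (φ : ℂ))) :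
    (2 * π * Complex.I)⁻¹ *
      (∮ ξ in C(0, 1),
        ((c : ℂ) * s +
            ((1 - (φ : ℂ) * ξ) * (1 - (φ : ℂ) * ξ⁻¹)) /
              ((1 + (θ : ℂ) * ξ) * (1 + (θ : ℂ) * ξ⁻¹)))⁻¹ * ξ⁻¹)
      = ((θ : ℂ) / ((c : ℂ) * s * (θ : ℂ) - (φ : ℂ))) *
        (1 - (((φ : ℂ) + (θ : ℂ)) * (1 + (φ : ℂ) * (θ : ℂ)) /
            ((θ : ℂ) * ((c : ℂ) * s * (θ : ℂ) - (φ : ℂ)))) *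
          (((Real.sign α.im : ℝ) : ℂ) / sqrtIm (α ^ 2 - 4))) := by
  set k : ℂ := c * s * θ - φ
  have hkα : k * α = c * s * (1 + θ ^ 2) + 1 + φ ^ 2 := by
    rw [hα, mul_div_cancel₀ _ hden]
  have hQ : ∀ ξ : ℂ, c * s * ((1 + θ * ξ) * (ξ + θ)) + (1 - φ * ξ) * (ξ - φ) =
      k * (ξ ^ 2 + α * ξ + 1) := fun ξ => by
    linear_combination -ξ * hkα
  obtain ⟨r₁, r₂, hsum, hprod, hr₁, hr₂⟩ := exists_roots_norm_lt_one_lt fun z hz hroot =>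
    arma_denominator_ne_zero hφ hc hs hz (by rw [hQ, hroot, mul_zero])
  rw [arma_circleIntegral_eq hQ hsum hprod hr₁ hr₂]
  have hP : ((φ : ℂ) + θ) * (1 + φ * θ) = -(k * (1 + θ ^ 2 - θ * α)) := by
    linear_combination -θ * hkα
  rw [hP]
  by_cases hX : 1 + (θ : ℂ) ^ 2 - θ * α = 0
  · simp [hX]
  · have hαim := arma_alpha_im_ne_zero hc hs hkα hX
    rw [sub_eq_sign_mul_sqrtIm hαim hsum hprod (hr₁.trans hr₂)]
    have hε : ((Real.sign α.im : ℝ) : ℂ) / sqrtIm (α ^ 2 - 4) =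
        (Real.sign α.im * sqrtIm (α ^ 2 - 4))⁻¹ := by
      rcases Real.sign_apply_eq_of_ne_zero _ hαim with h | h <;>
        simp [h, div_eq_mul_inv]
    rw [hε]
    generalize (Real.sign α.im : ℂ) * sqrtIm (α ^ 2 - 4) = d
    have hθ' : (θ : ℂ) ≠ 0 := ofReal_ne_zero.2 hθ
    field_simp
    ring
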